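/- For a bounded operator X on a reproducing kernel Hilbert space, ber(X)² ≤ (1/2) ber(X*X + XX*). -/

import Mathlib

variable {E : Type*} [NormedAddCommGroup E] [InnerProductSpace ℂ E] [CompleteSpace E] {Ω : Type*}

/-- Berezin number of `A` w.r.t. the family of normalized reproducing kernels `k`. -/
noncomputable def ber (k : Ω → E) (A : E →L[ℂ] E) : ℝ :=
  ⨆ p : Ω, ‖(inner ℂ (A (k p)) (k p) : ℂ)‖

noncomputable def adj (A : E →L[ℂ] E) : E →L[ℂ] E := ContinuousLinearMap.adjoint A

/-- Real part `(T + T*)/2`. -/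
noncomputable def reOp (T : E →L[ℂ] E) : E →L[ℂ] E := (2 : ℂ)⁻¹ • (T + adj T)

/-- Imaginary part `(T - T*)/(2i)`. -/
noncomputable def imOp (T : E →L[ℂ] E) : E →L[ℂ] E := (2 * Complex.I)⁻¹ • (T - adj T)

/-- `|X| = (X*X)^{1/2}`. -/
noncomputable def absOp (X : E →L[ℂ] E) : E →L[ℂ] E := CFC.sqrt (adj X * X)

/- Bounding `|⟨Xk, k⟩|` once by `‖Xk‖` and once by `‖X*k‖` gives
`|⟨Xk, k⟩|² ≤ ‖Xk‖ ‖X*k‖ ≤ (‖Xk‖² + ‖X*k‖²) / 2 = ⟨(X*X + XX*)k, k⟩ / 2` for a unit vector `k`;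
taking suprema over the normalized kernels gives the inequality. -/

open ContinuousLinearMap

theorem inner_adj_mul_add_mul_adj_apply_self (X : E →L[ℂ] E) (x : E) :
    inner ℂ ((adj X * X + X * adj X) x) x = ((‖X x‖ ^ 2 + ‖adj X x‖ ^ 2 : ℝ) : ℂ) := by
  simp only [add_apply, inner_add_left, mul_apply_eq_comp, adj]
  rw [adjoint_inner_left X, ← adjoint_inner_right X (adjoint X x), inner_self_eq_norm_sq_to_K,
    inner_self_eq_norm_sq_to_K]
  norm_cast

theorem norm_inner_apply_self_sq_le (X : E →L[ℂ] E) (x : E) :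
    ‖inner ℂ (X x) x‖ ^ 2 ≤ (1 / 2) * (‖X x‖ ^ 2 + ‖adj X x‖ ^ 2) * ‖x‖ ^ 2 := by
  have h_left : ‖inner ℂ (X x) x‖ ≤ ‖X x‖ * ‖x‖ := norm_inner_le_norm _ _
  have h_right : ‖inner ℂ (X x) x‖ ≤ ‖x‖ * ‖adj X x‖ := by
    rw [adj, ← adjoint_inner_right]
    exact norm_inner_le_norm _ _
  have h_amgm : ‖X x‖ * ‖adj X x‖ ≤ (1 / 2) * (‖X x‖ ^ 2 + ‖adj X x‖ ^ 2) := by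
    nlinarith [sq_nonneg (‖X x‖ - ‖adj X x‖)]
  calc ‖inner ℂ (X x) x‖ ^ 2 ≤ (‖X x‖ * ‖x‖) * (‖x‖ * ‖adj X x‖) := by
        rw [sq]; exact mul_le_mul h_left h_right (norm_nonneg _) (by positivity)
    _ = ‖X x‖ * ‖adj X x‖ * ‖x‖ ^ 2 := by ring
    _ ≤ (1 / 2) * (‖X x‖ ^ 2 + ‖adj X x‖ ^ 2) * ‖x‖ ^ 2 := by gcongr

omit [CompleteSpace E] in
theorem ber_nonneg (k : Ω → E) (A : E →L[ℂ] E) : 0 ≤ ber k A :=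
  Real.iSup_nonneg fun _ => norm_nonneg _

omit [CompleteSpace E] in
theorem norm_inner_le_ber {k : Ω → E} (hk : ∀ p, ‖k p‖ = 1) (A : E →L[ℂ] E) (p : Ω) :
    ‖inner ℂ (A (k p)) (k p)‖ ≤ ber k A := by
  refine le_ciSup (f := fun q => ‖inner ℂ (A (k q)) (k q)‖) ⟨‖A‖, ?_⟩ p
  rintro _ ⟨q, rfl⟩
  simpa [hk q] using (norm_inner_le_norm (A (k q)) (k q)).trans
    (mul_le_mul_of_nonneg_right (A.le_opNorm (k q)) (norm_nonneg _))

omit [CompleteSpace E] in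
theorem ber_sq_le {k : Ω → E} {A : E →L[ℂ] E} {c : ℝ} (hc : 0 ≤ c)
    (h : ∀ p, ‖inner ℂ (A (k p)) (k p)‖ ^ 2 ≤ c) : ber k A ^ 2 ≤ c := by
  have : ber k A ≤ √c :=
    Real.iSup_le (fun p => Real.le_sqrt_of_sq_le (h p)) (Real.sqrt_nonneg c)
  calc ber k A ^ 2 ≤ √c ^ 2 := by gcongr; exact ber_nonneg k A
    _ = c := Real.sq_sqrt hc

theorem stmt9 (k : Ω → E) (hk : ∀ p, ‖k p‖ = 1) (X : E →L[ℂ] E) :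
    (ber k X) ^ 2 ≤ (1 / 2) * ber k (adj X * X + X * adj X) := by
  refine ber_sq_le (mul_nonneg (by norm_num) (ber_nonneg _ _)) fun p => ?_
  calc ‖inner ℂ (X (k p)) (k p)‖ ^ 2
      ≤ (1 / 2) * (‖X (k p)‖ ^ 2 + ‖adj X (k p)‖ ^ 2) * ‖k p‖ ^ 2 :=
        norm_inner_apply_self_sq_le X (k p)
    _ = (1 / 2) * ‖inner ℂ ((adj X * X + X * adj X) (k p)) (k p)‖ := by
        rw [inner_adj_mul_add_mul_adj_apply_self, Complex.norm_real, Real.norm_of_nonneg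
          (by positivity), hk p, one_pow, mul_one]
    _ ≤ (1 / 2) * ber k (adj X * X + X * adj X) := by
        gcongr; exact norm_inner_le_ber hk _ p
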